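/- arXiv:math/9209218 — 6 statements merged into one kernel-verified Lean document; each statement's English description precedes it below -/
import Mathlib

section
/- Let m and l be strictly positive integers and 𝒜 a nonempty family of nonempty sets. Let 𝕋 be the family of nonempty subsets of 𝒜^m (sequences of length m from 𝒜). For 𝒯 ∈ 𝕋 write 𝒯* = { t↾j : t ∈ 𝒯, j ≤ m }. For 𝒯, 𝒯₀ ∈ 𝕋 say 𝒯 ⪯ 𝒯₀ if 𝒯 ⊆ 𝒯₀ and dp({ u : t⌢u ∈ 𝒯* }) ≥ dp({ u : t⌢u ∈ 𝒯₀* })/(2l) for every t ∈ 𝒯* \ 𝒯. Then for every 𝒯₀ ∈ 𝕋 and every cover ⟨𝒮_i⟩_{i<2l} of 𝒯₀ (i.e. 𝒯₀ ⊆ ⋃_{i<2l} 𝒮_i), there is a 𝒯 ⪯ 𝒯₀ such that 𝒯 ⊆ 𝒮_i for some i < 2l. -/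
/-- For a family `𝒜` of sets (not containing `∅`), `dp 𝒜` is the least cardinality of a finite
set `I` meeting every member of `𝒜`; in particular `dp ∅ = 0`. -/
noncomputable def dp {β : Type*} (𝒜 : Set (Set β)) : ℕ :=
  sInf {m | ∃ I : Finset β, I.card = m ∧ ∀ A ∈ 𝒜, ∃ a ∈ I, a ∈ A}

/-- For a set `𝒯` of sequences (of members of `𝒜`) of length `m`,
`starSet m 𝒯 = 𝒯* = { t↾j : t ∈ 𝒯, j ≤ m }`, the set of initial segments of members of `𝒯`. -/
def starSet {β : Type*} (m : ℕ) (𝒯 : Set (List (Set β))) : Set (List (Set β)) :=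
  {s | ∃ t ∈ 𝒯, ∃ j ≤ m, s = t.take j}

/-- `𝒯 ⪯ 𝒯₀` iff `𝒯 ⊆ 𝒯₀` and
`dp { u : t⌢u ∈ 𝒯* } ≥ dp { u : t⌢u ∈ 𝒯₀* } / (2l)` for every `t ∈ 𝒯* \ 𝒯`. -/
def prec {β : Type*} (l m : ℕ) (𝒯 𝒯₀ : Set (List (Set β))) : Prop :=
  𝒯 ⊆ 𝒯₀ ∧ ∀ t ∈ starSet m 𝒯 \ 𝒯,
    (dp {u | t ++ [u] ∈ starSet m 𝒯₀} : ℝ) / (2 * l) ≤ (dp {u | t ++ [u] ∈ starSet m 𝒯} : ℝ)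

/-!
Induction on `m`. A tree of height `m + 1` is a family of subtrees of height `m`, one below each
root-child `A`. By induction each subtree has a `⪯`-subtree inside a single `𝒮 i`; colour `A` by
that `i`. The root-children split into `2l` colour classes, and since `dp` is subadditive one
colour class keeps at least a `1/(2l)` share of `dp` at the root. Keeping the root-children of that
colour, each with its chosen subtree, gives the required tree: below the root the `⪯`-condition
is inherited from the subtrees.
-/

section Dp

variable {β : Type*}

lemma dp_le_card {𝒜 : Set (Set β)} (I : Finset β) (hI : ∀ A ∈ 𝒜, ∃ a ∈ I, a ∈ A) :
    dp 𝒜 ≤ I.card :=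
  Nat.sInf_le ⟨I, rfl, hI⟩

lemma exists_card_eq_dp {𝒜 : Set (Set β)} (h : ∃ I : Finset β, ∀ A ∈ 𝒜, ∃ a ∈ I, a ∈ A) :
    ∃ I : Finset β, I.card = dp 𝒜 ∧ ∀ A ∈ 𝒜, ∃ a ∈ I, a ∈ A := by
  obtain ⟨I, hI⟩ := h
  exact Nat.sInf_mem (s := {m | ∃ I : Finset β, I.card = m ∧ ∀ A ∈ 𝒜, ∃ a ∈ I, a ∈ A})
    ⟨I.card, I, rfl, hI⟩

@[simp]
lemma dp_empty : dp (∅ : Set (Set β)) = 0 :=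
  Nat.eq_zero_of_le_zero (dp_le_card ∅ (by simp))

/-- Subadditivity holds without finiteness assumptions: if some `f i` has no finite transversal,
neither has the union, and then `dp` of the union is `sInf ∅ = 0`. -/
lemma dp_iUnion_le_sum {ι : Type*} [Fintype ι] (f : ι → Set (Set β)) :
    dp (⋃ i, f i) ≤ ∑ i, dp (f i) := by
  classical
  by_cases h : ∀ i, ∃ I : Finset β, ∀ A ∈ f i, ∃ a ∈ I, a ∈ A
  · choose I hIcard hI using fun i => exists_card_eq_dp (h i)
    calc dp (⋃ i, f i) ≤ (Finset.univ.biUnion I).card := by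
          refine dp_le_card _ fun A hA => ?_
          obtain ⟨i, hAi⟩ := Set.mem_iUnion.mp hA
          obtain ⟨a, haI, haA⟩ := hI i A hAi
          exact ⟨a, Finset.mem_biUnion.mpr ⟨i, Finset.mem_univ i, haI⟩, haA⟩
      _ ≤ ∑ i, (I i).card := Finset.card_biUnion_le
      _ = ∑ i, dp (f i) := by simp only [hIcard]
  · push Not at h
    obtain ⟨i, hi⟩ := h
    have : dp (⋃ i, f i) = 0 := by
      refine Nat.sInf_eq_zero.mpr (Or.inr (Set.eq_empty_of_forall_notMem ?_))
      rintro n ⟨I, -, hI⟩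
      obtain ⟨A, hA, hIA⟩ := hi I
      obtain ⟨a, haI, haA⟩ := hI A (Set.mem_iUnion.mpr ⟨i, hA⟩)
      exact hIA a haI haA
    simp [this]

lemma exists_dp_le_card_mul_dp_colourClass {ι : Type*} [Fintype ι] {B : Set (Set β)}
    (hB : B.Nonempty) (c : Set β → ι) :
    ∃ i, {A ∈ B | c A = i}.Nonempty ∧ dp B ≤ Fintype.card ι * dp {A ∈ B | c A = i} := by
  obtain ⟨A₀, hA₀⟩ := hB
  by_cases h0 : dp B = 0
  · exact ⟨c A₀, ⟨A₀, hA₀, rfl⟩, by simp [h0]⟩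
  obtain ⟨i, -, hi⟩ := Finset.univ.exists_max_image (fun i => dp {A ∈ B | c A = i})
    ⟨c A₀, Finset.mem_univ _⟩
  have hB : B = ⋃ j, {A ∈ B | c A = j} := by ext A; simp
  have hle : dp B ≤ Fintype.card ι * dp {A ∈ B | c A = i} :=
    calc dp B ≤ ∑ j, dp {A ∈ B | c A = j} := (congrArg dp hB).le.trans (dp_iUnion_le_sum _)
      _ ≤ Finset.univ.card • dp {A ∈ B | c A = i} :=
          Finset.sum_le_card_nsmul _ _ _ fun j _ => hi j (Finset.mem_univ j)
      _ = Fintype.card ι * dp {A ∈ B | c A = i} := by simp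
  refine ⟨i, Set.nonempty_iff_ne_empty.mpr fun hempty => h0 ?_, hle⟩
  simpa [hempty] using hle

end Dp

section Trees

variable {β : Type*}

@[simp]
lemma nil_mem_starSet {m : ℕ} {𝒯 : Set (List (Set β))} : [] ∈ starSet m 𝒯 ↔ 𝒯.Nonempty :=
  ⟨fun ⟨t, ht, _⟩ => ⟨t, ht⟩, fun ⟨t, ht⟩ => ⟨t, ht, 0, Nat.zero_le _, rfl⟩⟩

@[simp]
lemma cons_mem_starSet_succ {m : ℕ} {𝒯 : Set (List (Set β))} {A : Set β} {s : List (Set β)} :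
    A :: s ∈ starSet (m + 1) 𝒯 ↔ s ∈ starSet m {t | A :: t ∈ 𝒯} := by
  constructor
  · rintro ⟨t, ht, j, hj, heq⟩
    match j, t, heq with
    | j + 1, u :: t, heq =>
      obtain ⟨rfl, rfl⟩ := List.cons_eq_cons.mp (heq.trans List.take_succ_cons)
      exact ⟨t, ht, j, by omega, rfl⟩
  · rintro ⟨t, ht, j, hj, rfl⟩
    exact ⟨A :: t, ht, j + 1, by omega, List.take_succ_cons.symm⟩

/-- The tree whose root-children are the members `A` of `B`, with the subtree `F A` below `A`. -/
def consSet (B : Set (Set β)) (F : Set β → Set (List (Set β))) : Set (List (Set β)) :=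
  {s | ∃ A ∈ B, ∃ t ∈ F A, s = A :: t}

@[simp]
lemma cons_mem_consSet {B : Set (Set β)} {F : Set β → Set (List (Set β))} {A : Set β}
    {t : List (Set β)} : A :: t ∈ consSet B F ↔ A ∈ B ∧ t ∈ F A := by
  constructor
  · rintro ⟨A', hA', t', ht', heq⟩
    obtain ⟨rfl, rfl⟩ := List.cons_eq_cons.mp heq
    exact ⟨hA', ht'⟩
  · rintro ⟨hA, ht⟩
    exact ⟨A, hA, t, ht, rfl⟩

lemma singleton_mem_starSet_succ {m : ℕ} {𝒯 : Set (List (Set β))} {A : Set β} :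
    [A] ∈ starSet (m + 1) 𝒯 ↔ ∃ t, A :: t ∈ 𝒯 := by
  simp only [cons_mem_starSet_succ, nil_mem_starSet]
  rfl

lemma prec_consSet {l m : ℕ} {𝒯₀ : Set (List (Set β))} {B : Set (Set β)}
    {F : Set β → Set (List (Set β))}
    (hF : ∀ A ∈ B, (F A).Nonempty ∧ prec l m (F A) {t | A :: t ∈ 𝒯₀})
    (hdp : (dp {A | ∃ t, A :: t ∈ 𝒯₀} : ℝ) / (2 * l) ≤ dp B) :
    prec l (m + 1) (consSet B F) 𝒯₀ := by
  refine ⟨fun s hs => ?_, fun s ⟨hs, hsnot⟩ => ?_⟩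
  · obtain ⟨A, hA, t, ht, rfl⟩ := hs
    exact (hF A hA).2.1 ht
  rcases s with _ | ⟨A, s⟩
  · have hroot : {A | [] ++ [A] ∈ starSet (m + 1) (consSet B F)} = B := by
      ext A
      simp only [List.nil_append, Set.mem_ofPred_eq, singleton_mem_starSet_succ,
        cons_mem_consSet]
      exact ⟨fun ⟨_, hA, _⟩ => hA, fun hA => (hF A hA).1.imp fun _ ht => ⟨hA, ht⟩⟩
    simp only [List.nil_append, singleton_mem_starSet_succ] at hroot ⊢
    rwa [hroot]
  · simp only [cons_mem_starSet_succ, cons_mem_consSet, List.cons_append] at hs hsnot ⊢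
    have hA : A ∈ B := by
      obtain ⟨t, ⟨hA, -⟩, -⟩ := hs
      exact hA
    have hsub : {t | A ∈ B ∧ t ∈ F A} = F A := by simp [hA]
    rw [hsub] at hs ⊢
    exact (hF A hA).2.2 s ⟨hs, fun h => hsnot ⟨hA, h⟩⟩

end Trees

lemma exists_prec_subset_of_subset_iUnion {β : Type*} {l m : ℕ} {𝒯₀ : Set (List (Set β))}
    (h𝒯₀ : 𝒯₀.Nonempty) (hlen : ∀ t ∈ 𝒯₀, t.length = m)
    {𝒮 : Fin (2 * l) → Set (List (Set β))} (hcover : 𝒯₀ ⊆ ⋃ i, 𝒮 i) :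
    ∃ 𝒯, 𝒯.Nonempty ∧ prec l m 𝒯 𝒯₀ ∧ ∃ i, 𝒯 ⊆ 𝒮 i := by
  induction m generalizing 𝒯₀ 𝒮 with
  | zero =>
    obtain ⟨t, ht⟩ := h𝒯₀
    obtain rfl : t = [] := List.length_eq_zero_iff.mp (hlen t ht)
    obtain ⟨i, hi⟩ := Set.mem_iUnion.mp (hcover ht)
    refine ⟨{[]}, Set.singleton_nonempty _, ⟨by simpa using ht, ?_⟩, i, by simpa using hi⟩
    rintro s ⟨⟨_, rfl, j, hj, rfl⟩, hs⟩
    simp at hs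
  | succ m ih =>
    obtain ⟨t₀, ht₀⟩ := h𝒯₀
    obtain ⟨i₀, -⟩ := Set.mem_iUnion.mp (hcover ht₀)
    -- `choose!` needs a default colour
    have : Nonempty (Fin (2 * l)) := ⟨i₀⟩
    set B := {A | ∃ t, A :: t ∈ 𝒯₀}
    have hsubtree : ∀ A ∈ B, ∃ 𝒯A i, 𝒯A.Nonempty ∧ prec l m 𝒯A {t | A :: t ∈ 𝒯₀} ∧
        𝒯A ⊆ {t | A :: t ∈ 𝒮 i} := by
      intro A hA
      obtain ⟨𝒯A, hne, hprec, i, hsub⟩ := ih hA (fun t ht => Nat.succ_injective (hlen _ ht))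
        (𝒮 := fun i => {t | A :: t ∈ 𝒮 i}) fun t ht => by simpa using hcover ht
      exact ⟨𝒯A, i, hne, hprec, hsub⟩
    choose! F c hF hprec hsub using hsubtree
    have hB : B.Nonempty := by
      obtain ⟨A, t, rfl⟩ := List.exists_cons_of_length_eq_add_one (hlen t₀ ht₀)
      exact ⟨A, t, ht₀⟩
    obtain ⟨i, ⟨A, hA, hAi⟩, hdp⟩ := exists_dp_le_card_mul_dp_colourClass hB c
    refine ⟨consSet {A ∈ B | c A = i} F, ?_, prec_consSet (fun A hA => ⟨hF A hA.1, hprec A hA.1⟩)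
      (div_le_of_le_mul₀ (by positivity) (Nat.cast_nonneg _) ?_), i, ?_⟩
    · obtain ⟨t, ht⟩ := hF A hA
      exact ⟨A :: t, cons_mem_consSet.mpr ⟨⟨hA, hAi⟩, ht⟩⟩
    · rw [mul_comm]
      exact_mod_cast (Fintype.card_fin (2 * l)) ▸ hdp
    · rintro _ ⟨A, ⟨hA, rfl⟩, t, ht, rfl⟩
      exact hsub A hA ht

theorem stmt_2_general {β : Type*} (m l : ℕ)
    (𝒜 : Set (Set β))
    (𝒯₀ : Set (List (Set β))) (h𝒯₀ : 𝒯₀.Nonempty)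
    (h𝒯₀m : ∀ t ∈ 𝒯₀, t.length = m ∧ ∀ u ∈ t, u ∈ 𝒜)
    (𝒮 : Fin (2 * l) → Set (List (Set β))) (hcover : 𝒯₀ ⊆ ⋃ i, 𝒮 i) :
    ∃ 𝒯 : Set (List (Set β)), 𝒯.Nonempty ∧ prec l m 𝒯 𝒯₀ ∧ ∃ i : Fin (2 * l), 𝒯 ⊆ 𝒮 i :=
  exists_prec_subset_of_subset_iUnion h𝒯₀ (fun t ht => (h𝒯₀m t ht).1) hcover

/-- **Lemma 1C.** Let `m, l ≥ 1` and `𝒜` a nonempty family of nonempty sets.  Let `𝕋` be the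
family of nonempty sets of sequences of length `m` from `𝒜`.  Fix `𝒯₀ ∈ 𝕋` and a cover
`⟨𝒮_i⟩_{i<2l}` of `𝒯₀`.  Then there is a `𝒯 ⪯ 𝒯₀` (in particular `𝒯 ∈ 𝕋`) with `𝒯 ⊆ 𝒮_i`
for some `i < 2l`. -/
theorem stmt_2 {β : Type*} (m l : ℕ) (hm : 1 ≤ m) (hl : 1 ≤ l)
    (𝒜 : Set (Set β)) (h𝒜 : 𝒜.Nonempty) (h𝒜ne : ∀ A ∈ 𝒜, A.Nonempty)
    (𝒯₀ : Set (List (Set β))) (h𝒯₀ : 𝒯₀.Nonempty)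
    (h𝒯₀m : ∀ t ∈ 𝒯₀, t.length = m ∧ ∀ u ∈ t, u ∈ 𝒜)
    (𝒮 : Fin (2 * l) → Set (List (Set β))) (hcover : 𝒯₀ ⊆ ⋃ i, 𝒮 i) :
    ∃ 𝒯 : Set (List (Set β)), 𝒯.Nonempty ∧ prec l m 𝒯 𝒯₀ ∧ ∃ i : Fin (2 * l), 𝒯 ⊆ 𝒮 i :=
  stmt_2_general m l 𝒜 𝒯₀ h𝒯₀ h𝒯₀m 𝒮 hcover
end

section
/- Let ⟨n_k⟩_{k∈ℕ} be integers with n_k ≥ 2^k and ⟨W_k⟩_{k∈ℕ} with W_k ⊆ n_k × n_k and #(W_k) ≤ 2^{−k}·n_k² for every k. Let X = ∏_{k∈ℕ} n_k with the product measure μ of the uniform probabilities, for each k let 𝓘_k = { I ⊆ n_k : #(I) ≤ k and (i,j) ∉ W_k for all distinct i, j ∈ I }, for I ⊆ n_k let H_{kI} = { x ∈ X : x(k) ∈ I }, and let A = { χH_{kI} : k ∈ ℕ, I ∈ 𝓘_k } ⊆ ℝ^X, where χH denotes the characteristic function of H. Then A is not stable with respect to μ. -/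
/-!
Take `α = 0`, `β = 1` and `E = X`, and fix `k, l`. For `k + l` independent samples, the event that
at level `m` two distinct samples have coordinates that are equal or related by `W m` has
probability at most `(k + l)² · #(diag ∪ W m) / (n m)² ≤ 2 (k + l)² / 2 ^ m`, which is summable.
By Borel–Cantelli, almost surely some level `m ≥ l` is free of such events; there
`I = {y j m | j}` belongs to `𝓘_m`, and `χH_{m I}` vanishes at every `x i` and equals `1` at
every `y j`. So the set in the definition of stability has measure `1 = (μ X) ^ (k + l)`.
-/

open MeasureTheory Filter Finset
open scoped ENNReal

def IsStable {X : Type*} [MeasurableSpace X] (μ : Measure X) (A : Set (X → ℝ)) : Prop :=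
  ∀ a b : ℝ, a < b → ∀ E : Set X, MeasurableSet E → 0 < μ E →
    ∃ k l : ℕ, 1 ≤ k ∧ 1 ≤ l ∧
      ((Measure.pi fun _ : Fin k => μ).prod (Measure.pi fun _ : Fin l => μ))
        {p : (Fin k → X) × (Fin l → X) |
          (∀ i, p.1 i ∈ E) ∧ (∀ j, p.2 j ∈ E) ∧
          ∃ f ∈ A, (∀ i, f (p.1 i) ≤ a) ∧ (∀ j, b ≤ f (p.2 j))} < (μ E) ^ (k + l)

section PairsOfSamples
variable {ι X : Type*} [Fintype ι] [MeasurableSpace X] (μ : Measure X)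
  [IsProbabilityMeasure μ]

theorem measure_pi_eval_mem_and_eval_mem {s t : ι} (hst : s ≠ t) (S T : Set X) :
    Measure.pi (fun _ : ι => μ) {z | z s ∈ S ∧ z t ∈ T} = μ S * μ T := by
  classical
  have hpi : {z : ι → X | z s ∈ S ∧ z t ∈ T} =
      Set.univ.pi (Function.update (Function.update (fun _ => Set.univ) s S) t T) := by
    ext z
    simp only [Set.mem_ofPred_eq, Set.mem_pi, Set.mem_univ, true_implies]
    refine ⟨fun h i => ?_, fun h => ⟨by simpa [hst] using h s, by simpa using h t⟩⟩
    rcases eq_or_ne i t with rfl | hit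
    · simpa using h.2
    rcases eq_or_ne i s with rfl | his
    · simpa [hit] using h.1
    · simp [hit, his]
  rw [hpi, Measure.pi_pi]
  simp only [Function.apply_update (fun _ => μ), measure_univ]
  rw [prod_update_of_mem (mem_univ t), prod_update_of_mem (by simpa using hst)]
  simp [mul_comm]

variable {α : Type*} {f : X → α} {c : ℝ≥0∞} (R : Finset (α × α))

theorem measure_pi_pair_mem_le (hc : ∀ v, μ (f ⁻¹' {v}) ≤ c) {s t : ι} (hst : s ≠ t) :
    Measure.pi (fun _ : ι => μ) {z | (f (z s), f (z t)) ∈ R} ≤ #R * c ^ 2 := by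
  calc _ ≤ ∑ r ∈ R, Measure.pi (fun _ => μ) {z | z s ∈ f ⁻¹' {r.1} ∧ z t ∈ f ⁻¹' {r.2}} := by
        refine (measure_mono fun z hz => ?_).trans (measure_biUnion_finset_le R _)
        exact Set.mem_biUnion hz ⟨rfl, rfl⟩
    _ ≤ ∑ _ ∈ R, c ^ 2 := by
        gcongr with r
        rw [measure_pi_eval_mem_and_eval_mem μ hst, sq]
        exact mul_le_mul' (hc _) (hc _)
    _ = #R * c ^ 2 := by simp

theorem measure_pi_exists_pair_mem_le (hc : ∀ v, μ (f ⁻¹' {v}) ≤ c) :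
    Measure.pi (fun _ : ι => μ) {z | ∃ s t, s ≠ t ∧ (f (z s), f (z t)) ∈ R}
      ≤ Fintype.card ι ^ 2 * (#R * c ^ 2) := by
  calc _ ≤ ∑ s : ι, ∑ t : ι, Measure.pi (fun _ => μ) {z | s ≠ t ∧ (f (z s), f (z t)) ∈ R} := by
        refine (measure_mono ?_).trans ((measure_biUnion_finset_le univ _).trans
          (sum_le_sum fun s _ => measure_biUnion_finset_le univ _))
        rintro z ⟨s, t, hz⟩
        exact Set.mem_biUnion (mem_univ s) (Set.mem_biUnion (mem_univ t) hz)
    _ ≤ ∑ _ : ι, ∑ _ : ι, #R * c ^ 2 := by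
        gcongr with s _ t
        rcases eq_or_ne s t with rfl | hst
        · simp
        · simpa [hst] using measure_pi_pair_mem_le μ R hc hst
    _ = Fintype.card ι ^ 2 * (#R * c ^ 2) := by simp [sq, mul_assoc]

theorem ae_eventually_forall_pair_notMem {α : ℕ → Type*} {f : ∀ m, X → α m}
    (R : ∀ m, Finset (α m × α m)) {c : ℕ → ℝ≥0∞} (hc : ∀ m v, μ (f m ⁻¹' {v}) ≤ c m)
    (hsum : ∑' m, #(R m) * c m ^ 2 ≠ ∞) :
    ∀ᵐ z ∂Measure.pi (fun _ : ι => μ),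
      ∀ᶠ m in atTop, ∀ s t, s ≠ t → (f m (z s), f m (z t)) ∉ R m := by
  have hbad : ∑' m, Measure.pi (fun _ : ι => μ)
      {z | ∃ s t, s ≠ t ∧ (f m (z s), f m (z t)) ∈ R m} ≠ ∞ := by
    refine ne_top_of_le_ne_top ?_
      (ENNReal.tsum_le_tsum fun m => measure_pi_exists_pair_mem_le μ (R m) (hc m))
    rw [ENNReal.tsum_mul_left]
    exact ENNReal.mul_ne_top (by simp) hsum
  filter_upwards [ae_eventually_notMem hbad] with z hz
  exact hz.mono fun m hm s t hst hR => hm ⟨s, t, hst, hR⟩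

end PairsOfSamples

theorem card_diag_union_mul_inv_sq_le {N m : ℕ} (hN : 2 ^ m ≤ N) {W : Finset (Fin N × Fin N)}
    (hW : (#W : ℝ) ≤ (N : ℝ) ^ 2 / 2 ^ m) :
    (#(univ.diag ∪ W) : ℝ≥0∞) * (N : ℝ≥0∞)⁻¹ ^ 2 ≤ 2 * 2⁻¹ ^ m := by
  have hN' : (2 : ℝ) ^ m ≤ N := by exact_mod_cast hN
  have hN0 : (0 : ℝ) < N := (by positivity : (0 : ℝ) < 2 ^ m).trans_le hN'
  have hcard : (#(univ.diag ∪ W) : ℝ) ≤ N + N ^ 2 / 2 ^ m := by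
    calc (#(univ.diag ∪ W) : ℝ) ≤ #(univ.diag : Finset (Fin N × Fin N)) + #W := by
          exact_mod_cast card_union_le _ _
      _ ≤ N + N ^ 2 / 2 ^ m := by simpa using hW
  have hreal : (#(univ.diag ∪ W) : ℝ) * (N : ℝ)⁻¹ ^ 2 ≤ 2 * 2⁻¹ ^ m := by
    calc (#(univ.diag ∪ W) : ℝ) * (N : ℝ)⁻¹ ^ 2 ≤ (N + N ^ 2 / 2 ^ m) * (N : ℝ)⁻¹ ^ 2 := by
          gcongr
      _ = (N : ℝ)⁻¹ + 2⁻¹ ^ m := by rw [div_eq_mul_inv, ← inv_pow]; field_simp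
      _ ≤ 2 * 2⁻¹ ^ m := by
          rw [two_mul, inv_pow]
          gcongr
  simpa [ENNReal.ofReal_mul, ENNReal.ofReal_pow, ENNReal.ofReal_inv_of_pos, hN0, ENNReal.inv_pow]
    using ENNReal.ofReal_le_ofReal hreal

theorem measure_coord_eq_of_cylinder {n : ℕ → ℕ} {μ : Measure (∀ k, Fin (n k))}
    (hcyl : ∀ s : Finset ℕ, ∀ t : ∀ k, Finset (Fin (n k)),
      μ {x | ∀ k ∈ s, x k ∈ t k} = ∏ k ∈ s, ((t k).card : ℝ≥0∞) / (n k : ℝ≥0∞))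
    (m : ℕ) (v : Fin (n m)) :
    μ {x | x m = v} = (n m : ℝ≥0∞)⁻¹ := by
  simpa using hcyl {m} (Function.update (fun k => univ) m {v})

theorem exists_finset_separating_inr {α β γ : Type*} [Fintype β] [Fintype γ] [DecidableEq γ]
    {W : Finset (γ × γ)} {u : α ⊕ β → γ} (hu : ∀ s t, s ≠ t → (u s, u t) ∉ univ.diag ∪ W) :
    ∃ I : Finset γ, (#I ≤ Fintype.card β ∧ ∀ i ∈ I, ∀ j ∈ I, i ≠ j → (i, j) ∉ W) ∧
      (∀ a, u (.inl a) ∉ I) ∧ ∀ b, u (.inr b) ∈ I := by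
  refine ⟨univ.image (u ∘ .inr), ⟨card_image_le, ?_⟩, fun a => ?_, fun b => by simp⟩
  · simp only [mem_image, mem_univ, true_and, Function.comp_apply]
    rintro _ ⟨b, rfl⟩ _ ⟨b', rfl⟩ hne
    exact fun hW => hu _ _ (hne ∘ congrArg u) (mem_union_right _ hW)
  · simp only [mem_image, mem_univ, true_and, Function.comp_apply, not_exists]
    exact fun b hb => hu (.inl a) (.inr b) Sum.inl_ne_inr (mem_union_left _ (by simp [hb]))

/-- Let `⟨n_k⟩` be integers with `n_k ≥ 2^k`, `W_k ⊆ n_k × n_k` with `#(W_k) ≤ 2^{-k}·n_k²`.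
Let `X = ∏_k n_k` with the product measure `μ` of the uniform probabilities (characterized by
its values on cylinders), let `𝓘_k = {I ⊆ n_k : #(I) ≤ k, (i,j) ∉ W_k for distinct i,j ∈ I}`,
`H_{kI} = {x : x(k) ∈ I}`, and `A = {χH_{kI} : k ∈ ℕ, I ∈ 𝓘_k} ⊆ ℝ^X`.  Then `A` is not
stable with respect to `μ`. -/
theorem stmt_7 (n : ℕ → ℕ) (hn : ∀ k, 2 ^ k ≤ n k)
    (W : ∀ k, Finset (Fin (n k) × Fin (n k)))
    (hW : ∀ k, ((W k).card : ℝ) ≤ ((n k : ℝ)) ^ 2 / 2 ^ k)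
    (μ : Measure (∀ k, Fin (n k))) (hμ : IsProbabilityMeasure μ)
    (hcyl : ∀ s : Finset ℕ, ∀ t : ∀ k, Finset (Fin (n k)),
      μ {x | ∀ k ∈ s, x k ∈ t k} = ∏ k ∈ s, ((t k).card : ℝ≥0∞) / (n k : ℝ≥0∞)) :
    ¬ IsStable μ
      {f : (∀ k, Fin (n k)) → ℝ |
        ∃ k : ℕ, ∃ I : Finset (Fin (n k)),
          (I.card ≤ k ∧ ∀ i ∈ I, ∀ j ∈ I, i ≠ j → (i, j) ∉ W k) ∧
          f = Set.indicator {x : ∀ k', Fin (n k') | x k ∈ I} (fun _ => (1 : ℝ))} := by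
  intro hstab
  obtain ⟨k, l, -, -, hlt⟩ := hstab 0 1 one_pos Set.univ MeasurableSet.univ (by simp)
  have := hμ
  have hsum : ∑' m, #(univ.diag ∪ W m) * ((n m : ℝ≥0∞)⁻¹) ^ 2 ≠ ∞ :=
    ne_top_of_le_ne_top (by simp [ENNReal.tsum_mul_left, ENNReal.mul_eq_top])
      (ENNReal.tsum_le_tsum fun m => card_diag_union_mul_inv_sq_le (hn m) (hW m))
  have hgood := ae_eventually_forall_pair_notMem (ι := Fin k ⊕ Fin l) μ (f := fun m x => x m)
    (fun m => univ.diag ∪ W m) (fun m v => (measure_coord_eq_of_cylinder hcyl m v).le) hsum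
  refine hlt.not_ge ?_
  -- the `k + l` samples, as one family indexed by `Fin k ⊕ Fin l`
  rw [measure_univ, one_pow, ← (measurePreserving_sumPiEquivProdPi fun _ => μ).map_eq,
    MeasurableEquiv.map_apply, ← measure_univ (μ := Measure.pi fun _ : Fin k ⊕ Fin l => μ)]
  refine (measure_congr (ae_eq_univ.2 (ae_iff.1 ?_))).ge
  filter_upwards [hgood] with z hz
  obtain ⟨m, hm, hlm⟩ := (hz.and (eventually_ge_atTop l)).exists
  obtain ⟨I, hI, hinl, hinr⟩ := exists_finset_separating_inr (u := fun s => z s m) hm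
  set H : Set (∀ k, Fin (n k)) := {x | x m ∈ I}
  refine ⟨fun _ => trivial, fun _ => trivial, H.indicator fun _ => 1,
    ⟨m, I, ⟨hI.1.trans ((Fintype.card_fin l).trans_le hlm), hI.2⟩, rfl⟩, fun i => ?_, fun j => ?_⟩
  · exact (Set.indicator_of_notMem (s := H) (hinl i) fun _ => (1 : ℝ)).le
  · exact (Set.indicator_of_mem (s := H) (hinr j) fun _ => (1 : ℝ)).ge
end

section
/- Let ⟨n_k⟩_{k∈ℕ} be strictly positive integers and W_k ⊆ n_k × n_k for each k. Let X = ∏_{k∈ℕ} n_k, 𝓘_k = { I ⊆ n_k : #(I) ≤ k and (i,j) ∉ W_k for all distinct i, j ∈ I }, H_{kI} = { x ∈ X : x(k) ∈ I }, A = { χH_{kI} : k ∈ ℕ, I ∈ 𝓘_k } ⊆ ℝ^X, and let Z be the closure of A in ℝ^X for the product (pointwise convergence) topology. Then every element of Z \ A is the characteristic function χE of a set E ⊆ X such that (i) whenever x ∈ E, x′ ∈ X and {k : x(k) ≠ x′(k)} is finite, then x′ ∈ E, and (ii) (x,y) ∉ R for all x, y ∈ E, where R = { (x,y) ∈ X ×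 X : (x(k), y(k)) ∈ W_k for every k and {k : x(k) = y(k)} is finite }. -/
/-!
`A` is the union over `k` of the finite sets `A_k = {χH_{kI} : I ∈ 𝓘_k}`, so a point `u` of
`closure A \ A` is a limit of functions `χH_{kI}` with `k` arbitrarily large. All of these are
`{0,1}`-valued, hence so is `u = χE`, and for any two points `x, y` some `χH_{kI}` with `k` large
agrees with `u` at `x` and `y`. If `x, x'` differ in finitely many coordinates, then
`x k = x' k` for large `k`, which gives (i). If `(x, y) ∈ R` with `x, y ∈ E`, then for large `k`
the distinct points `x k, y k` both lie in `I` while `(x k, y k) ∈ W_k`, contradicting `I ∈ 𝓘_k`.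
-/

open Filter Set

section ZeroOneClosure

variable {X : Type*}

theorem eq_indicator_of_forall_mem_zero_one {u : X → ℝ} (hu : ∀ x, u x ∈ ({0, 1} : Set ℝ)) :
    u = Set.indicator {x | u x = 1} fun _ => 1 := by
  ext x
  obtain h | h : u x = 0 ∨ u x = 1 := hu x <;> simp [h]

theorem forall_mem_zero_one_of_mem_closure {S : Set (X → ℝ)}
    (hS : ∀ f ∈ S, ∀ x, f x ∈ ({0, 1} : Set ℝ)) {u : X → ℝ} (hu : u ∈ closure S) :
    ∀ x, u x ∈ ({0, 1} : Set ℝ) := by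
  have hclosed : IsClosed (Set.univ.pi fun _ : X => ({0, 1} : Set ℝ)) :=
    isClosed_set_pi fun _ _ => (Set.toFinite _).isClosed
  simpa using closure_minimal (fun f hf => by simpa using hS f hf) hclosed hu

/-- Values in `{0, 1}` at distance `< 1` coincide, so the basic neighbourhood of `u` given by
the points of `s` only meets functions agreeing with `u` on `s`. -/
theorem exists_eqOn_of_mem_closure {S : Set (X → ℝ)}
    (hS : ∀ f ∈ S, ∀ x, f x ∈ ({0, 1} : Set ℝ)) {u : X → ℝ} (hu : u ∈ closure S)
    {s : Set X} (hs : s.Finite) : ∃ f ∈ S, EqOn f u s := by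
  have hopen : IsOpen (s.pi fun x => Metric.ball (u x) 1) :=
    isOpen_set_pi hs fun _ _ => Metric.isOpen_ball
  obtain ⟨f, hfu, hfS⟩ :=
    mem_closure_iff.1 hu _ hopen fun x _ => Metric.mem_ball_self one_pos
  refine ⟨f, hfS, fun x hx => ?_⟩
  have hdist : dist (f x) (u x) < 1 := hfu x hx
  obtain h | h : f x = 0 ∨ f x = 1 := hS f hfS x
  <;> obtain h' | h' : u x = 0 ∨ u x = 1 := forall_mem_zero_one_of_mem_closure hS hu x
  <;> simp only [h, h', Real.dist_eq] at hdist ⊢ <;> norm_num at hdist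

end ZeroOneClosure

theorem mem_closure_biUnion_ge_of_notMem {α : Type*} [TopologicalSpace α] [T1Space α]
    {F : ℕ → Set α} (hF : ∀ k, (F k).Finite) {u : α}
    (hu : u ∈ closure (⋃ k, F k) \ ⋃ k, F k) (N : ℕ) : u ∈ closure (⋃ k ≥ N, F k) := by
  have hsplit : ⋃ k, F k ⊆ (⋃ k < N, F k) ∪ ⋃ k ≥ N, F k := by
    intro x hx
    obtain ⟨k, hk⟩ := mem_iUnion.1 hx
    rcases lt_or_ge k N with h | h
    · exact Or.inl (mem_iUnion₂.2 ⟨k, h, hk⟩)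
    · exact Or.inr (mem_iUnion₂.2 ⟨k, h, hk⟩)
  have hhead : (⋃ k < N, F k).Finite := (Set.finite_lt_nat N).biUnion fun k _ => hF k
  have := closure_mono hsplit hu.1
  rw [closure_union, hhead.isClosed.closure_eq] at this
  exact this.resolve_left fun h => hu.2 (iUnion₂_subset_iUnion _ _ h)

theorem frequently_exists_eqOn_of_mem_closure_iUnion {X : Type*} {F : ℕ → Set (X → ℝ)}
    (hF : ∀ k, (F k).Finite) (hF01 : ∀ k, ∀ f ∈ F k, ∀ x, f x ∈ ({0, 1} : Set ℝ))
    {u : X → ℝ} (hu : u ∈ closure (⋃ k, F k) \ ⋃ k, F k) {s : Set X} (hs : s.Finite) :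
    ∃ᶠ k in atTop, ∃ f ∈ F k, EqOn f u s := by
  refine frequently_atTop.2 fun N => ?_
  have hS : ∀ f ∈ ⋃ k ≥ N, F k, ∀ x, f x ∈ ({0, 1} : Set ℝ) := fun f hf => by
    obtain ⟨k, -, hfk⟩ := mem_iUnion₂.1 hf
    exact hF01 k f hfk
  obtain ⟨f, hf, hfu⟩ := exists_eqOn_of_mem_closure hS (mem_closure_biUnion_ge_of_notMem hF hu N) hs
  obtain ⟨k, hk, hfk⟩ := mem_iUnion₂.1 hf
  exact ⟨k, hk, f, hfk, hfu⟩

section Cylinders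

variable {α : ℕ → Type*}

def IsAdmissible (W : ∀ k, Finset (α k × α k)) (k : ℕ) (I : Finset (α k)) : Prop :=
  I.card ≤ k ∧ ∀ i ∈ I, ∀ j ∈ I, i ≠ j → (i, j) ∉ W k

noncomputable def cylinderIndicator (k : ℕ) (I : Finset (α k)) : (∀ k, α k) → ℝ :=
  Set.indicator {x | x k ∈ I} fun _ => 1

def admissibleIndicators (W : ∀ k, Finset (α k × α k)) (k : ℕ) : Set ((∀ k, α k) → ℝ) :=
  cylinderIndicator k '' {I | IsAdmissible W k I}

theorem admissibleIndicators_finite [∀ k, Finite (α k)] (W : ∀ k, Finset (α k × α k)) (k : ℕ) :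
    (admissibleIndicators W k).Finite :=
  (Set.toFinite _).image _

theorem admissibleIndicators_mem_zero_one (W : ∀ k, Finset (α k × α k)) (k : ℕ) :
    ∀ f ∈ admissibleIndicators W k, ∀ x, f x ∈ ({0, 1} : Set ℝ) := by
  rintro _ ⟨I, -, rfl⟩ x
  by_cases h : x k ∈ I <;> simp [cylinderIndicator, h]

theorem mem_iff_of_cylinderIndicator_eq {k : ℕ} {I : Finset (α k)} {E : Set (∀ k, α k)}
    {x : ∀ k, α k} (h : cylinderIndicator k I x = Set.indicator E (fun _ => 1) x) :
    x k ∈ I ↔ x ∈ E := by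
  by_cases hI : x k ∈ I <;> by_cases hE : x ∈ E <;>
    simp_all [cylinderIndicator]

theorem exists_eq_indicator_of_mem_closure_iUnion_admissibleIndicators
    {W : ∀ k, Finset (α k × α k)} {u : (∀ k, α k) → ℝ}
    (hu : u ∈ closure (⋃ k, admissibleIndicators W k)) :
    ∃ E : Set (∀ k, α k), u = Set.indicator E fun _ => 1 := by
  refine ⟨_, eq_indicator_of_forall_mem_zero_one (forall_mem_zero_one_of_mem_closure ?_ hu)⟩
  intro f hf
  obtain ⟨k, hk⟩ := mem_iUnion.1 hf
  exact admissibleIndicators_mem_zero_one W k f hk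

theorem frequently_exists_isAdmissible_of_mem_closure_diff [∀ k, Finite (α k)]
    {W : ∀ k, Finset (α k × α k)} {u : (∀ k, α k) → ℝ}
    (hu : u ∈ closure (⋃ k, admissibleIndicators W k) \ ⋃ k, admissibleIndicators W k)
    {E : Set (∀ k, α k)} (huE : u = Set.indicator E fun _ => 1) (x y : ∀ k, α k) :
    ∃ᶠ k in atTop, ∃ I, IsAdmissible W k I ∧ (x k ∈ I ↔ x ∈ E) ∧ (y k ∈ I ↔ y ∈ E) := by
  refine (frequently_exists_eqOn_of_mem_closure_iUnion (admissibleIndicators_finite W)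
    (admissibleIndicators_mem_zero_one W) hu (s := {x, y}) (by simp)).mono ?_
  rintro k ⟨_, ⟨I, hI, rfl⟩, hIu⟩
  rw [huE] at hIu
  exact ⟨I, hI, mem_iff_of_cylinderIndicator_eq (hIu (by simp)),
    mem_iff_of_cylinderIndicator_eq (hIu (by simp))⟩

end Cylinders

theorem eventually_atTop_of_finite_setOf_not {p : ℕ → Prop} (h : {k | ¬p k}.Finite) :
    ∀ᶠ k in atTop, p k :=
  Nat.cofinite_eq_atTop ▸ eventually_cofinite.2 h

theorem stmt_8_general (n : ℕ → ℕ)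
    (W : ∀ k, Finset (Fin (n k) × Fin (n k)))
    (A : Set ((∀ k, Fin (n k)) → ℝ))
    (hA : A = {f | ∃ k : ℕ, ∃ I : Finset (Fin (n k)),
      (I.card ≤ k ∧ ∀ i ∈ I, ∀ j ∈ I, i ≠ j → (i, j) ∉ W k) ∧
      f = Set.indicator {x : ∀ k', Fin (n k') | x k ∈ I} (fun _ => (1 : ℝ))}) :
    ∀ u ∈ closure A \ A,
      ∃ E : Set (∀ k, Fin (n k)),
        u = Set.indicator E (fun _ => (1 : ℝ)) ∧
        (∀ x ∈ E, ∀ x' : ∀ k, Fin (n k), {k | x k ≠ x' k}.Finite → x' ∈ E) ∧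
        (∀ x ∈ E, ∀ y ∈ E,
          ¬ ((∀ k, (x k, y k) ∈ W k) ∧ {k | x k = y k}.Finite)) := by
  have hA_iUnion : A = ⋃ k, admissibleIndicators W k := by
    ext f
    simp [hA, admissibleIndicators, IsAdmissible, cylinderIndicator, eq_comm]
  intro u hu
  rw [hA_iUnion] at hu
  obtain ⟨E, huE⟩ := exists_eq_indicator_of_mem_closure_iUnion_admissibleIndicators hu.1
  have key := frequently_exists_isAdmissible_of_mem_closure_diff hu huE
  refine ⟨E, huE, ?_, ?_⟩
  · intro x hx x' hfin
    obtain ⟨k, ⟨I, -, hxI, hx'I⟩, hk⟩ :=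
      ((key x x').and_eventually (eventually_atTop_of_finite_setOf_not hfin)).exists
    exact hx'I.1 (hk ▸ hxI.2 hx)
  · rintro x hx y hy ⟨hW, hfin⟩
    obtain ⟨k, ⟨I, hI, hxI, hyI⟩, hk⟩ :=
      ((key x y).and_eventually (eventually_atTop_of_finite_setOf_not (p := fun k => x k ≠ y k)
        (by simpa using hfin))).exists
    exact hI.2 _ (hxI.2 hx) _ (hyI.2 hy) hk (hW k)

/-- Let `⟨n_k⟩` be strictly positive integers, `W_k ⊆ n_k × n_k`, `X = ∏_k n_k`,
`𝓘_k = {I ⊆ n_k : #(I) ≤ k, (i,j) ∉ W_k for distinct i,j ∈ I}`, `H_{kI} = {x : x(k) ∈ I}`,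
`A = {χH_{kI} : k ∈ ℕ, I ∈ 𝓘_k} ⊆ ℝ^X`, and `Z` the closure of `A` in `ℝ^X` for the topology
of pointwise convergence.  Then every `u ∈ Z \ A` is the characteristic function `χE` of a set
`E ⊆ X` such that (i) `E` is invariant under changing finitely many coordinates, and (ii)
`(x,y) ∉ R` for all `x, y ∈ E`, where
`R = {(x,y) : (x(k),y(k)) ∈ W_k ∀ k, {k : x(k) = y(k)} finite}`. -/
theorem stmt_8 (n : ℕ → ℕ) (hn : ∀ k, 0 < n k)
    (W : ∀ k, Finset (Fin (n k) × Fin (n k)))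
    (A : Set ((∀ k, Fin (n k)) → ℝ))
    (hA : A = {f | ∃ k : ℕ, ∃ I : Finset (Fin (n k)),
      (I.card ≤ k ∧ ∀ i ∈ I, ∀ j ∈ I, i ≠ j → (i, j) ∉ W k) ∧
      f = Set.indicator {x : ∀ k', Fin (n k') | x k ∈ I} (fun _ => (1 : ℝ))}) :
    ∀ u ∈ closure A \ A,
      ∃ E : Set (∀ k, Fin (n k)),
        u = Set.indicator E (fun _ => (1 : ℝ)) ∧
        (∀ x ∈ E, ∀ x' : ∀ k, Fin (n k), {k | x k ≠ x' k}.Finite → x' ∈ E) ∧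
        (∀ x ∈ E, ∀ y ∈ E,
          ¬ ((∀ k, (x k, y k) ∈ W k) ∧ {k | x k = y k}.Finite)) :=
  stmt_8_general n W A hA
end

section
/- Let ⟨n_k⟩_{k∈ℕ} be integers with n_k ≥ 2^k and W_k ⊆ n_k × n_k for each k. Let X = ∏_{k∈ℕ} n_k with the product measure μ of the uniform probabilities, 𝓘_k = { I ⊆ n_k : #(I) ≤ k and (i,j) ∉ W_k for all distinct i, j ∈ I }, H_{kI} = { x ∈ X : x(k) ∈ I }, A = { χH_{kI} : k ∈ ℕ, I ∈ 𝓘_k } ⊆ ℝ^X, and Z the closure of A in ℝ^X for the topology of pointwise convergence. For each μ-measurable set E ⊆ X define f_E : Z → ℝ by f_E(h) = ∫_E h dμ for h ∈ A and f_E(u) = 0 for u ∈ Z \ A. Then f_E is continuous on Z. -/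
/-!
A cylinder indicator `χH_{kI}` with `∅ ≠ I ≠ n_k` is an isolated point of `Z`: on the line
`i ↦ x₀[k := i]` it reads off `I`, while the indicator of a cylinder over another coordinate is
constant there, and probing the finitely many points of this line is an open condition. Every
other point `u` of `Z` has `f_E(u) = 0`, and `|f_E(χH_{kI})| ≤ μ(H_{kI}) ≤ k / 2^k`; so for each
`ε > 0` only the finitely many cylinder indicators with small `k` have `|f_E| ≥ ε`, and removing
this closed finite set leaves a neighbourhood of `u` on which `|f_E| < ε`.
-/

open MeasureTheory Filter Topology Set
open scoped ENNReal Classical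

theorem iff_of_dist_ite_lt_one {p q : Prop} [Decidable p] [Decidable q]
    (h : dist (if p then (1 : ℝ) else 0) (if q then 1 else 0) < 1) : p ↔ q := by
  split_ifs at h with hp hq hq <;> norm_num at h <;> simp only [hp, hq]

theorem continuousWithinAt_closure_of_not_accPt {X Y : Type*} [TopologicalSpace X] [T1Space X]
    [TopologicalSpace Y] {f : X → Y} {s : Set X} {x : X} (h : ¬AccPt x (𝓟 s)) :
    ContinuousWithinAt f (closure s) x := by
  refine continuousWithinAt_of_not_accPt ?_
  rwa [← mem_derivedSet, derivedSet_closure]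

theorem continuousWithinAt_closure_of_finite_setOf_le_dist {X Y : Type*} [TopologicalSpace X]
    [T1Space X] [PseudoMetricSpace Y] {f : X → Y} {s : Set X} {x : X}
    (hout : ∀ v ∈ closure s \ s, f v = f x)
    (hfin : ∀ ε > 0, {v ∈ s | ε ≤ dist (f v) (f x)}.Finite) :
    ContinuousWithinAt f (closure s) x := by
  rw [ContinuousWithinAt, Metric.tendsto_nhds]
  intro ε hε
  have hx : x ∉ {v ∈ s | ε ≤ dist (f v) (f x)} := fun h => by
    simpa [h.2] using hε.trans_le h.2
  filter_upwards [mem_nhdsWithin_of_mem_nhds ((hfin ε hε).isClosed.isOpen_compl.mem_nhds hx),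
    self_mem_nhdsWithin] with v hvF hvs
  by_cases hv : v ∈ s
  · exact not_le.mp fun h => hvF ⟨hv, h⟩
  · rwa [hout v ⟨hvs, hv⟩, dist_self]

theorem finite_setOf_le_norm_of_tendsto {Y E : Type*} [SeminormedAddGroup E] {β : ℕ → Type*}
    [∀ k, Finite (β k)] {g : ∀ k, β k → Y} {F : Y → E} {c : ℕ → ℝ}
    (hc : Tendsto c atTop (𝓝 0)) {s : Set Y} (hs : ∀ y ∈ s, ∃ k i, y = g k i ∧ ‖F y‖ ≤ c k)
    {ε : ℝ} (hε : 0 < ε) : {y ∈ s | ε ≤ ‖F y‖}.Finite := by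
  obtain ⟨K, hK⟩ := eventually_atTop.mp (hc.eventually (gt_mem_nhds hε))
  refine ((finite_Iio K).biUnion fun k _ => finite_range (g k)).subset ?_
  rintro y ⟨hy, hεy⟩
  obtain ⟨k, i, rfl, hyc⟩ := hs y hy
  have hkK : k < K := not_le.mp fun h => (hK k h).not_ge (hεy.trans hyc)
  exact mem_biUnion hkK (mem_range_self i)

theorem setIntegral_indicator_one_le_measureReal {X : Type*} [MeasurableSpace X] {μ : Measure X}
    {H : Set X} (hH : MeasurableSet H) (hμH : μ H ≠ ⊤) (E : Set X) :
    ∫ x in E, H.indicator (fun _ => (1 : ℝ)) x ∂μ ≤ μ.real H := by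
  rw [← Pi.one_def, integral_indicator_one hH]
  exact ENNReal.toReal_mono hμH (Measure.restrict_le_self H)

section CylinderIndicator

variable {ι : Type*} {α : ι → Type*}

noncomputable def cylIndicator (k : ι) (I : Finset (α k)) : (∀ k, α k) → ℝ :=
  indicator {x | x k ∈ I} fun _ => 1

theorem cylIndicator_apply (k : ι) (I : Finset (α k)) (x : ∀ k, α k) :
    cylIndicator k I x = if x k ∈ I then 1 else 0 :=
  indicator_apply _ _ _

theorem not_accPt_cylIndicator [DecidableEq ι] [∀ k, Nonempty (α k)] {k : ι} [Finite (α k)]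
    {I : Finset (α k)} {a b : α k} (ha : a ∈ I) (hb : b ∉ I) :
    ¬AccPt (cylIndicator k I) (𝓟 {v | ∃ k', ∃ I' : Finset (α k'), v = cylIndicator k' I'}) := by
  set x₀ : ∀ k, α k := fun k => Classical.arbitrary (α k)
  set u := cylIndicator k I
  set U := ⋂ i : α k, (fun v : (∀ k, α k) → ℝ => v (Function.update x₀ k i)) ⁻¹'
    Metric.ball (u (Function.update x₀ k i)) 1
  have hU : U ∈ 𝓝 u := by
    refine (isOpen_iInter_of_finite fun i => Metric.isOpen_ball.preimage
      (continuous_apply (Function.update x₀ k i))).mem_nhds ?_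
    simp
  have probe {k' : ι} (I' : Finset (α k')) (hv : cylIndicator k' I' ∈ U) (i : α k) :
      Function.update x₀ k i k' ∈ I' ↔ i ∈ I := by
    have hi := mem_iInter.mp hv i
    simp only [mem_preimage, Metric.mem_ball, u, cylIndicator_apply,
      Function.update_self] at hi
    exact iff_of_dist_ite_lt_one hi
  rw [accPt_iff_nhds]
  push Not
  refine ⟨U, hU, ?_⟩
  rintro _ ⟨hv, k', I', rfl⟩
  obtain rfl | hk := eq_or_ne k' k
  · congr 1
    ext i
    simpa using probe I' hv i
  · have ha' := probe I' hv a
    have hb' := probe I' hv b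
    rw [Function.update_of_ne hk] at ha' hb'
    exact absurd (hb'.mp (ha'.mpr ha)) hb

end CylinderIndicator

theorem norm_setIntegral_cylIndicator_le {n : ℕ → ℕ} {μ : Measure (∀ k, Fin (n k))}
    (hcyl : ∀ s : Finset ℕ, ∀ t : ∀ k, Finset (Fin (n k)),
      μ {x | ∀ k ∈ s, x k ∈ t k} = ∏ k ∈ s, ((t k).card : ℝ≥0∞) / (n k : ℝ≥0∞))
    (E : Set (∀ k, Fin (n k))) {k : ℕ} (hk : n k ≠ 0) (I : Finset (Fin (n k))) :
    ‖∫ x in E, cylIndicator k I x ∂μ‖ ≤ I.card / n k := by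
  have hμH : μ {x | x k ∈ I} = I.card / n k := by
    simpa using hcyl {k} (Function.update (fun _ => Finset.univ) k I)
  rw [cylIndicator, Real.norm_of_nonneg
    (integral_nonneg fun x => indicator_nonneg (fun _ _ => zero_le_one) x)]
  calc _ ≤ μ.real {x | x k ∈ I} :=
        setIntegral_indicator_one_le_measureReal (H := {x : ∀ k, Fin (n k) | x k ∈ I})
          (measurable_pi_apply k I.finite_toSet.measurableSet)
          (by rw [hμH]; exact ENNReal.div_ne_top (by simp) (by simpa using hk)) E
    _ = I.card / n k := by rw [measureReal_def, hμH, ENNReal.toReal_div]; simp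

theorem stmt_10_general (n : ℕ → ℕ) (hn : ∀ k, 2 ^ k ≤ n k)
    (W : ∀ k, Finset (Fin (n k) × Fin (n k)))
    (μ : Measure (∀ k, Fin (n k)))
    (hcyl : ∀ s : Finset ℕ, ∀ t : ∀ k, Finset (Fin (n k)),
      μ {x | ∀ k ∈ s, x k ∈ t k} = ∏ k ∈ s, ((t k).card : ℝ≥0∞) / (n k : ℝ≥0∞))
    (A : Set ((∀ k, Fin (n k)) → ℝ))
    (hA : A = {f | ∃ k : ℕ, ∃ I : Finset (Fin (n k)),
      (I.card ≤ k ∧ ∀ i ∈ I, ∀ j ∈ I, i ≠ j → (i, j) ∉ W k) ∧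
      f = Set.indicator {x : ∀ k', Fin (n k') | x k ∈ I} (fun _ => (1 : ℝ))})
    (E : Set (∀ k, Fin (n k)))
    (fE : ((∀ k, Fin (n k)) → ℝ) → ℝ)
    (hfE : fE = fun u => if u ∈ A then ∫ x in E, u x ∂μ else 0) :
    ContinuousOn fE (closure A) := by
  have hn₀ (k : ℕ) : n k ≠ 0 := ((Nat.two_pow_pos k).trans_le (hn k)).ne'
  have (k : ℕ) : Nonempty (Fin (n k)) := Fin.pos_iff_nonempty.mp (Nat.pos_of_ne_zero (hn₀ k))
  have hAcyl : ∀ v ∈ A, ∃ k, ∃ I : Finset (Fin (n k)), I.card ≤ k ∧ v = cylIndicator k I := by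
    rw [hA]
    rintro v ⟨k, I, ⟨hI, -⟩, rfl⟩
    exact ⟨k, I, hI, rfl⟩
  have hbound (k : ℕ) (I : Finset (Fin (n k))) (hI : I.card ≤ k) :
      ‖∫ x in E, cylIndicator k I x ∂μ‖ ≤ k / 2 ^ k :=
    (norm_setIntegral_cylIndicator_le hcyl E (hn₀ k) I).trans <| div_le_div₀ (by positivity)
      (by exact_mod_cast hI) (by positivity) (by exact_mod_cast hn k)
  intro u _
  by_cases hiso : ∃ k, ∃ I : Finset (Fin (n k)), I.Nonempty ∧ I.card ≤ k ∧ u = cylIndicator k I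
  · obtain ⟨k, I, ⟨a, ha⟩, hIk, rfl⟩ := hiso
    obtain ⟨b, -, hb⟩ := Finset.exists_mem_notMem_of_card_lt_card (s := I) (t := Finset.univ)
      (by simpa using hIk.trans_lt (Nat.lt_two_pow_self.trans_le (hn k)))
    refine continuousWithinAt_closure_of_not_accPt fun hacc =>
      not_accPt_cylIndicator (α := fun k => Fin (n k)) ha hb (hacc.mono (principal_mono.mpr ?_))
    intro v hv
    obtain ⟨k', I', -, rfl⟩ := hAcyl v hv
    exact ⟨k', I', rfl⟩
  · have hu : fE u = 0 := by
      simp only [hfE]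
      split_ifs with huA
      · obtain ⟨k, I, hI, rfl⟩ := hAcyl u huA
        obtain rfl : I = ∅ :=
          Finset.not_nonempty_iff_eq_empty.mp fun hne => hiso ⟨k, I, hne, hI, rfl⟩
        simp [cylIndicator]
      · rfl
    refine continuousWithinAt_closure_of_finite_setOf_le_dist (fun v hv => ?_) fun ε hε => ?_
    · rw [hu]
      simp only [hfE, if_neg hv.2]
    · simp only [hu, dist_zero_right]
      refine finite_setOf_le_norm_of_tendsto (g := cylIndicator) (c := fun k => (k : ℝ) / 2 ^ k)
        (by simpa using tendsto_pow_const_div_const_pow_of_one_lt 1 one_lt_two)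
        (fun v hv => ?_) hε
      obtain ⟨k, I, hI, rfl⟩ := hAcyl v hv
      exact ⟨k, I, rfl, by simpa [hfE, hv] using hbound k I hI⟩

/-- Let `⟨n_k⟩` be integers with `n_k ≥ 2^k`, `W_k ⊆ n_k × n_k`, `X = ∏_k n_k` with the product
measure `μ` of the uniform probabilities (characterized by its values on cylinders),
`𝓘_k = {I ⊆ n_k : #(I) ≤ k, (i,j) ∉ W_k for distinct i,j ∈ I}`, `H_{kI} = {x : x(k) ∈ I}`,
`A = {χH_{kI} : k, I ∈ 𝓘_k}` and `Z` the pointwise closure of `A` in `ℝ^X`.  For a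
`μ`-measurable set `E ⊆ X` define `f_E : Z → ℝ` by `f_E(h) = ∫_E h dμ` for `h ∈ A` and
`f_E(u) = 0` for `u ∈ Z \ A`.  Then `f_E` is continuous on `Z`. -/
theorem stmt_10 (n : ℕ → ℕ) (hn : ∀ k, 2 ^ k ≤ n k)
    (W : ∀ k, Finset (Fin (n k) × Fin (n k)))
    (μ : Measure (∀ k, Fin (n k))) (hμ : IsProbabilityMeasure μ)
    (hcyl : ∀ s : Finset ℕ, ∀ t : ∀ k, Finset (Fin (n k)),
      μ {x | ∀ k ∈ s, x k ∈ t k} = ∏ k ∈ s, ((t k).card : ℝ≥0∞) / (n k : ℝ≥0∞))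
    (A : Set ((∀ k, Fin (n k)) → ℝ))
    (hA : A = {f | ∃ k : ℕ, ∃ I : Finset (Fin (n k)),
      (I.card ≤ k ∧ ∀ i ∈ I, ∀ j ∈ I, i ≠ j → (i, j) ∉ W k) ∧
      f = Set.indicator {x : ∀ k', Fin (n k') | x k ∈ I} (fun _ => (1 : ℝ))})
    (E : Set (∀ k, Fin (n k))) (hE : NullMeasurableSet E μ)
    (fE : ((∀ k, Fin (n k)) → ℝ) → ℝ)
    (hfE : fE = fun u => if u ∈ A then ∫ x in E, u x ∂μ else 0) :
    ContinuousOn fE (closure A) :=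
  stmt_10_general n hn W μ hcyl A hA E fE hfE
end

section
/- Suppose there is a closed set Q ⊆ [0,1]² which is negligible for two-dimensional Lebesgue measure and such that whenever D ⊆ [0,1] has Lebesgue outer measure 1, the set Q^{-1}[D] = { x ∈ [0,1] : there is y ∈ D with (x,y) ∈ Q } has Lebesgue inner measure 1. Then there is a set Q′ ⊆ [0,1]², negligible for two-dimensional Lebesgue measure, such that whenever C, D ⊆ [0,1] and (C × D) ∩ Q′ = ∅, at least one of C, D has Lebesgue outer measure zero. -/
/-!
Put `Q' = {(x, y) ∈ [0,1]² : (x, y + q) ∈ Q for some q ∈ ℚ}`, a countable union of null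
translates of `Q`. If `C × D` misses `Q'` with `C, D` of positive outer measure, then
`D̃ = [0,1] ∩ (D + ℚ)` has outer measure `1`: a measurable `H ⊆ [0,1] \ D̃` of positive measure
would make `H + ℚ` conull by a Lebesgue density argument, while `D` avoids `H + ℚ`.
So `Q⁻¹[D̃]` has inner measure `1` and meets `C` at some `x`, with `(x, d + q) ∈ Q` for some
`d ∈ D`, `q ∈ ℚ`; that is, `(x, d) ∈ (C × D) ∩ Q'`.
-/

open MeasureTheory
open scoped ENNReal

/-- The Lebesgue *inner measure* of a set `S ⊆ ℝ`:
`sup { μ_L K : K ⊆ S, K Lebesgue measurable }`. -/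
noncomputable def innerMeasure (S : Set ℝ) : ℝ≥0∞ :=
  ⨆ (K : Set ℝ) (_ : K ⊆ S) (_ : MeasurableSet K), volume K

open Set Metric Filter Topology

lemma exists_tendsto_measure_inter_closedBall_div {S : Set ℝ} (hS : volume S ≠ 0) :
    ∃ x, Tendsto (fun r => volume (S ∩ closedBall x r) / volume (closedBall x r))
      (𝓝[>] 0) (𝓝 1) :=
  haveI : (ae (volume.restrict S)).NeBot := ae_neBot.2 (by simp [Measure.restrict_eq_zero, hS])
  (Besicovitch.ae_tendsto_measure_inter_div volume S).exists

lemma eventually_ofReal_lt_volume_inter_closedBall {S : Set ℝ} {z c : ℝ} (hc : c < 1)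
    (h : Tendsto (fun r => volume (S ∩ closedBall z r) / volume (closedBall z r))
      (𝓝[>] 0) (𝓝 1)) :
    ∀ᶠ r in 𝓝[>] 0, ENNReal.ofReal (2 * c * r) < volume (S ∩ closedBall z r) := by
  have hc' : ENNReal.ofReal c < 1 := ENNReal.ofReal_lt_one.2 hc
  filter_upwards [h.eventually (eventually_gt_nhds hc'), self_mem_nhdsWithin] with r hr hr0
  have hr0 : (0 : ℝ) < r := hr0
  rw [Real.volume_closedBall, ENNReal.lt_div_iff_mul_lt (Or.inl (ENNReal.ofReal_pos.2 (by positivity)).ne')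
    (Or.inl ENNReal.ofReal_ne_top), ← ENNReal.ofReal_mul' (by positivity)] at hr
  rwa [mul_comm 2 c, mul_assoc]

/-- Compare density points `x` of `V` and `y` of `Vᶜ`: translating by some `s ∈ S` close to
`y - x` carries most of a small ball around `x`, inside `V`, onto most of the same-sized ball
around `y`, which is mostly outside `V`. -/
theorem volume_compl_eq_zero_of_add_mem {S V : Set ℝ} (hS : Dense S) (hV : MeasurableSet V)
    (hinv : ∀ s ∈ S, ∀ v ∈ V, v + s ∈ V) (hV0 : volume V ≠ 0) : volume Vᶜ = 0 := by
  by_contra hVc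
  obtain ⟨x, hx⟩ := exists_tendsto_measure_inter_closedBall_div hV0
  obtain ⟨y, hy⟩ := exists_tendsto_measure_inter_closedBall_div hVc
  obtain ⟨r, hxr, hyr, hr0⟩ :=
    ((eventually_ofReal_lt_volume_inter_closedBall (c := 3 / 4) (by norm_num) hx).and
      ((eventually_ofReal_lt_volume_inter_closedBall (c := 3 / 4) (by norm_num) hy).and
        self_mem_nhdsWithin)).exists
  have hr0 : (0 : ℝ) < r := hr0
  obtain ⟨s, hsS, hs⟩ := hS.exists_dist_lt (y - x) (show 0 < r / 10 by positivity)
  rw [Real.dist_eq, abs_lt] at hs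
  set W := (· + -s) ⁻¹' (V ∩ closedBall x r)
  have hWvol : volume W = volume (V ∩ closedBall x r) := measure_preimage_add_right _ _ _
  have hWV : W ⊆ V := fun t ht => by simpa using hinv s hsS _ ht.1
  have hWball : W ⊆ closedBall y (r + r / 10) := by
    intro t ⟨_, ht⟩
    rw [mem_closedBall, Real.dist_eq, abs_le] at ht ⊢
    constructor <;> linarith
  have hcompl : Vᶜ ∩ closedBall y r ⊆ closedBall y (r + r / 10) :=
    inter_subset_right.trans (closedBall_subset_closedBall (by linarith))
  have hdisj : Disjoint W (Vᶜ ∩ closedBall y r) :=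
    disjoint_left.2 fun t htW htV => htV.1 (hWV htW)
  have hupper : volume W + volume (Vᶜ ∩ closedBall y r) ≤ ENNReal.ofReal (2 * (r + r / 10)) := by
    rw [← measure_union hdisj (hV.compl.inter measurableSet_closedBall),
      ← Real.volume_closedBall]
    exact measure_mono (union_subset hWball hcompl)
  have hlower : ENNReal.ofReal (2 * (3 / 4) * r) + ENNReal.ofReal (2 * (3 / 4) * r)
      < volume W + volume (Vᶜ ∩ closedBall y r) := by
    rw [hWvol]
    exact ENNReal.add_lt_add hxr hyr
  rw [← ENNReal.ofReal_add (by positivity) (by positivity)] at hlower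
  have := (ENNReal.ofReal_lt_ofReal_iff_of_nonneg (by positivity)).1 (hlower.trans_le hupper)
  linarith

/-- `ratOrbit D` is `D + ℚ`. -/
def ratOrbit (D : Set ℝ) : Set ℝ := {y | ∃ q : ℚ, y + q ∈ D}

lemma subset_ratOrbit (D : Set ℝ) : D ⊆ ratOrbit D :=
  fun y hy => ⟨0, by simpa using hy⟩

lemma add_rat_mem_ratOrbit {D : Set ℝ} {y : ℝ} (hy : y ∈ ratOrbit D) (q : ℚ) :
    y + q ∈ ratOrbit D := by
  obtain ⟨q', hq'⟩ := hy
  exact ⟨q' - q, by push_cast; convert hq' using 1; ring⟩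

lemma measurableSet_ratOrbit {D : Set ℝ} (hD : MeasurableSet D) :
    MeasurableSet (ratOrbit D) := by
  have : ratOrbit D = ⋃ q : ℚ, (· + (q : ℝ)) ⁻¹' D := by ext; simp [ratOrbit]
  rw [this]
  exact .iUnion fun q => hD.preimage (measurable_add_const _)

lemma volume_compl_ratOrbit_eq_zero {H : Set ℝ} (hH : MeasurableSet H) (h0 : volume H ≠ 0) :
    volume (ratOrbit H)ᶜ = 0 :=
  volume_compl_eq_zero_of_add_mem Rat.denseRange_cast (measurableSet_ratOrbit hH)
    (by rintro _ ⟨q, rfl⟩ y hy; exact add_rat_mem_ratOrbit hy q)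
    (fun h => h0 (measure_mono_null (subset_ratOrbit H) h))

theorem volume_inter_ratOrbit {D B : Set ℝ} (hD : volume D ≠ 0) (hB : MeasurableSet B) :
    volume (B ∩ ratOrbit D) = volume B := by
  refine le_antisymm (measure_mono inter_subset_left) ?_
  set T := toMeasurable volume (B ∩ ratOrbit D)
  have hgap : volume (B \ T) = 0 := by
    by_contra hpos
    refine hD (measure_mono_null ?_ (volume_compl_ratOrbit_eq_zero
      (hB.diff (measurableSet_toMeasurable _ _)) hpos))
    rintro d hd ⟨q, hBT, hT⟩
    refine hT (subset_toMeasurable _ _ ⟨hBT, -q, ?_⟩)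
    simpa using hd
  calc volume B ≤ volume T := measure_mono_ae (ae_le_set.2 hgap)
    _ = volume (B ∩ ratOrbit D) := measure_toMeasurable _

lemma volume_setOf_exists_rat_add_snd_mem_eq_zero {Q : Set (ℝ × ℝ)} (hQ : volume Q = 0) :
    volume {p : ℝ × ℝ | ∃ q : ℚ, (p.1, p.2 + q) ∈ Q} = 0 := by
  rw [ofPred_exists]
  refine measure_iUnion_null fun q => ?_
  have hshift : MeasurePreserving (fun p : ℝ × ℝ => (p.1, p.2 + (q : ℝ))) volume volume := by
    rw [Measure.volume_eq_prod]
    exact (MeasurePreserving.id _).prod (measurePreserving_add_right volume (q : ℝ))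
  exact hshift.preimage_null hQ

lemma exists_measurableSet_subset_lt_volume {S : Set ℝ} {c : ℝ≥0∞} (h : c < innerMeasure S) :
    ∃ K ⊆ S, MeasurableSet K ∧ c < volume K := by
  obtain ⟨K, hK, hKS, hcK⟩ : ∃ K, MeasurableSet K ∧ K ⊆ S ∧ c < volume K := by
    simpa [innerMeasure, lt_iSup_iff] using h
  exact ⟨K, hKS, hK, hcK⟩

lemma inter_nonempty_of_innerMeasure_eq {A B C : Set ℝ} (hAB : A ⊆ B) (hCB : C ⊆ B)
    (hB : volume B ≠ ∞) (hC : volume C ≠ 0) (hA : innerMeasure A = volume B) :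
    (C ∩ A).Nonempty := by
  have hCB' : volume C ≤ volume B := measure_mono hCB
  obtain ⟨K, hKA, hK, hBK⟩ := exists_measurableSet_subset_lt_volume (S := A) (by
    rw [hA]; exact ENNReal.sub_lt_self hB (fun h => hC (le_antisymm (h ▸ hCB') bot_le)) hC)
  rw [ENNReal.sub_lt_iff_lt_right (ne_top_of_le_ne_top hB hCB') hCB', add_comm] at hBK
  exact (nonempty_inter_of_measure_lt_add volume hK hCB (hKA.trans hAB) hBK).mono
    (inter_subset_inter_right _ hKA)

theorem stmt_18_general (Q : Set (ℝ × ℝ))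
    (hQsub : Q ⊆ Set.Icc (0 : ℝ) 1 ×ˢ Set.Icc (0 : ℝ) 1)
    (hQnull : volume Q = 0)
    (hQ : ∀ D : Set ℝ, D ⊆ Set.Icc (0 : ℝ) 1 → volume D = 1 →
      innerMeasure {x : ℝ | ∃ y ∈ D, (x, y) ∈ Q} = 1) :
    ∃ Q' : Set (ℝ × ℝ),
      Q' ⊆ Set.Icc (0 : ℝ) 1 ×ˢ Set.Icc (0 : ℝ) 1 ∧
      volume Q' = 0 ∧
      ∀ C D : Set ℝ, C ⊆ Set.Icc (0 : ℝ) 1 → D ⊆ Set.Icc (0 : ℝ) 1 →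
        (C ×ˢ D) ∩ Q' = ∅ → volume C = 0 ∨ volume D = 0 := by
  have hI : volume (Icc (0 : ℝ) 1) = 1 := by simp
  refine ⟨(Icc 0 1 ×ˢ Icc 0 1) ∩ {p | ∃ q : ℚ, (p.1, p.2 + q) ∈ Q}, inter_subset_left,
    measure_mono_null inter_subset_right (volume_setOf_exists_rat_add_snd_mem_eq_zero hQnull), ?_⟩
  intro C D hC hD hCD
  by_contra! ⟨hC0, hD0⟩
  have hA := hQ (Icc 0 1 ∩ ratOrbit D) inter_subset_left
    (by rw [volume_inter_ratOrbit hD0 measurableSet_Icc, hI])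
  obtain ⟨x, hxC, y, ⟨-, q, hyq⟩, hxy⟩ := inter_nonempty_of_innerMeasure_eq
    (hA := hA.trans hI.symm) (by rintro x ⟨_, _, hxy⟩; exact (hQsub hxy).1) hC (by simp) hC0
  exact eq_empty_iff_forall_notMem.1 hCD (x, y + q)
    ⟨⟨hxC, hyq⟩, ⟨hC hxC, hD hyq⟩, -q, by simpa using hxy⟩

/-- **2G, (‡) ⇒ (‡)′.**  Suppose there is a closed set `Q ⊆ [0,1]²`, negligible for
two-dimensional Lebesgue measure, such that whenever `D ⊆ [0,1]` has Lebesgue outer measure `1`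
then `Q⁻¹[D] = { x : ∃ y ∈ D, (x,y) ∈ Q }` has Lebesgue inner measure `1`.  Then there is a set
`Q′ ⊆ [0,1]²`, negligible for two-dimensional Lebesgue measure, such that whenever
`C, D ⊆ [0,1]` and `(C × D) ∩ Q′ = ∅`, at least one of `C`, `D` has Lebesgue outer measure
zero. -/
theorem stmt_18 (Q : Set (ℝ × ℝ))
    (hQsub : Q ⊆ Set.Icc (0 : ℝ) 1 ×ˢ Set.Icc (0 : ℝ) 1)
    (hQclosed : IsClosed Q)
    (hQnull : volume Q = 0)
    (hQ : ∀ D : Set ℝ, D ⊆ Set.Icc (0 : ℝ) 1 → volume D = 1 →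
      innerMeasure {x : ℝ | ∃ y ∈ D, (x, y) ∈ Q} = 1) :
    ∃ Q' : Set (ℝ × ℝ),
      Q' ⊆ Set.Icc (0 : ℝ) 1 ×ˢ Set.Icc (0 : ℝ) 1 ∧
      volume Q' = 0 ∧
      ∀ C D : Set ℝ, C ⊆ Set.Icc (0 : ℝ) 1 → D ⊆ Set.Icc (0 : ℝ) 1 →
        (C ×ˢ D) ∩ Q' = ∅ → volume C = 0 ∨ volume D = 0 :=
  stmt_18_general Q hQsub hQnull hQ
end

section
/- Assume (*). Then there is no closed set Q ⊆ [0,1]², negligible for two-dimensional Lebesgue measure, such that whenever D ⊆ [0,1] has Lebesgue outer measure 1, the set Q^{-1}[D] = { x ∈ [0,1] : there is y ∈ D with (x,y) ∈ Q } has Lebesgue inner measure 1; that is, (*) and (‡) are mutually incompatible. -/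
open MeasureTheory
open scoped ENNReal

/-- The statement `(*)` (Talagrand's "Axiom L"): `[0,1]` is not the union of fewer than `𝔠`
closed Lebesgue negligible sets. -/
def StarProp : Prop :=
  ∀ 𝒞 : Set (Set ℝ), Cardinal.mk 𝒞 < Cardinal.continuum →
    (∀ C ∈ 𝒞, IsClosed C ∧ volume C = 0) → ¬ Set.Icc (0 : ℝ) 1 ⊆ ⋃₀ 𝒞

/-- The statement `(‡)`: there is a closed set `Q ⊆ [0,1]²`, negligible for two-dimensional
Lebesgue measure, such that whenever `D ⊆ [0,1]` has Lebesgue outer measure `1` then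
`Q⁻¹[D] = { x : ∃ y ∈ D, (x,y) ∈ Q }` has Lebesgue inner measure `1`. -/
def DoubleDaggerProp : Prop :=
  ∃ Q : Set (ℝ × ℝ),
    Q ⊆ Set.Icc (0 : ℝ) 1 ×ˢ Set.Icc (0 : ℝ) 1 ∧
    IsClosed Q ∧
    volume Q = 0 ∧
    ∀ D : Set ℝ, D ⊆ Set.Icc (0 : ℝ) 1 → volume D = 1 →
      innerMeasure {x : ℝ | ∃ y ∈ D, (x, y) ∈ Q} = 1

/-!
Under `(*)`, a compact set `F` of positive measure is not covered by fewer than `𝔠` closed null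
sets: its normalised distribution function `t ↦ μ(F ∩ (-∞, t]) / μ F` is Lipschitz, maps `F` onto
`[0,1]` and carries closed null sets to closed null sets. By inner regularity the same holds for
measurable sets of positive measure, even after removing a null set.

Given `Q`, enumerate the compact subsets of `[0,1]` of positive measure as `(F i)` in order type
`𝔠` and choose, by transfinite recursion, `x i, y i ∈ F i` avoiding the fewer than `𝔠` closed
sections of `Q` through earlier points. By Fubini almost every section of `Q` is null, so this is
possible, and `(x i, y j) ∉ Q` for all `i, j`. Then `D = {y i}` has full outer measure, while
`Q⁻¹[D]` misses `{x i}`, which meets every compact set of positive measure, so `Q⁻¹[D]` has inner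
measure `0`.
-/

open Set Function
open scoped NNReal Cardinal

universe u

theorem exists_forall_of_forall_exists_Iio {ι α : Type*} [Preorder ι] [WellFoundedLT ι]
    (P : ∀ i : ι, (Iio i → α) → α → Prop) (h : ∀ i prev, ∃ a, P i prev a) :
    ∃ f : ι → α, ∀ i, P i (fun j => f j) (f i) := by
  refine ⟨wellFounded_lt.fix fun i prev => (h i fun j => prev j j.2).choose, fun i => ?_⟩
  rw [wellFounded_lt.fix_eq]
  exact (h i _).choose_spec

theorem exists_range_eq_of_mk_le {α ι : Type u} {s : Set α} (hs : s.Nonempty)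
    (h : #s ≤ #ι) : ∃ f : ι → α, range f = s := by
  obtain ⟨g, hg⟩ : ∃ g : ι → s, Surjective g :=
    exists_surjective_iff.mpr ⟨⟨fun _ => ⟨_, hs.some_mem⟩⟩, (Cardinal.le_def _ _).mp h⟩
  exact ⟨Subtype.val ∘ g, by rw [range_comp, hg.range_eq, image_univ, Subtype.range_coe]⟩

theorem MeasurableSpace.mk_setOf_measurableSet_le_continuum {α : Type*} [m : MeasurableSpace α]
    [MeasurableSpace.CountablyGenerated α] : #{s : Set α | MeasurableSet s} ≤ 𝔠 := by
  obtain ⟨b, hb, hgen⟩ := MeasurableSpace.CountablyGenerated.isCountablyGenerated (α := α)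
  subst hgen
  exact MeasurableSpace.cardinal_measurableSet_le_continuum
    (hb.le_aleph0.trans Cardinal.aleph0_le_continuum)

theorem LipschitzWith.volume_image_eq_zero {f : ℝ → ℝ} {K : ℝ≥0} (hf : LipschitzWith K f)
    {s : Set ℝ} (hs : volume s = 0) : volume (f '' s) = 0 := by
  simpa [hausdorffMeasure_real, hs] using hf.hausdorffMeasure_image_le zero_le_one s

theorem volume_inter_Iic_le (F : Set ℝ) (x y : ℝ) :
    volume (F ∩ Iic x) ≤ volume (F ∩ Iic y) + ENNReal.ofReal (x - y) := by
  calc volume (F ∩ Iic x) ≤ volume (F ∩ Iic y ∪ Ioc y x) :=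
        measure_mono fun t ⟨htF, htx⟩ => by
          rcases le_or_gt t y with hty | hty
          exacts [Or.inl ⟨htF, hty⟩, Or.inr ⟨hty, htx⟩]
    _ ≤ _ := by rw [← Real.volume_Ioc]; exact measure_union_le _ _

theorem lipschitzWith_volume_inter_Iic {F : Set ℝ} (hF : volume F ≠ ∞) :
    LipschitzWith 1 fun t => (volume (F ∩ Iic t)).toReal := by
  have hfin (t : ℝ) : volume (F ∩ Iic t) ≠ ∞ := measure_ne_top_of_subset inter_subset_left hF
  refine LipschitzWith.of_le_add fun x y => ?_
  calc (volume (F ∩ Iic x)).toReal ≤ (volume (F ∩ Iic y) + ENNReal.ofReal (x - y)).toReal :=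
        ENNReal.toReal_mono (by finiteness) (volume_inter_Iic_le F x y)
    _ ≤ (volume (F ∩ Iic y)).toReal + dist x y := by
        rw [ENNReal.toReal_add (hfin y) ENNReal.ofReal_ne_top, ENNReal.toReal_ofReal']
        gcongr
        exact max_le ((le_abs_self _).trans (Real.dist_eq x y).ge) dist_nonneg

theorem IsCompact.Icc_subset_image_volume_inter_Iic {F : Set ℝ} (hF : IsCompact F)
    (hne : F.Nonempty) :
    Icc 0 (volume F).toReal ⊆ (fun t => (volume (F ∩ Iic t)).toReal) '' F := by
  have hmin : volume (F ∩ Iic (sInf F)) = 0 :=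
    measure_mono_null (fun t ht => le_antisymm ht.2 (csInf_le hF.bddBelow ht.1))
      (measure_singleton (sInf F))
  have hmax : F ∩ Iic (sSup F) = F := inter_eq_left.mpr fun t ht => le_csSup hF.bddAbove ht
  intro s hs
  obtain ⟨t, ht, hts⟩ := intermediate_value_Icc (csInf_le_csSup hne hF.bddBelow hF.bddAbove)
    (lipschitzWith_volume_inter_Iic hF.measure_lt_top.ne).continuous.continuousOn
    (by rwa [hmin, hmax, ENNReal.toReal_zero])
  -- the function is constant on the gap of `F` between `sSup (F ∩ Iic t)` and `t`
  have hFt : IsCompact (F ∩ Iic t) := hF.inter_right isClosed_Iic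
  have hFt_ne : (F ∩ Iic t).Nonempty := ⟨sInf F, hF.sInf_mem hne, ht.1⟩
  have hle : sSup (F ∩ Iic t) ≤ t := csSup_le hFt_ne fun _ h => h.2
  refine ⟨sSup (F ∩ Iic t), (hFt.sSup_mem hFt_ne).1, ?_⟩
  rw [← hts]
  dsimp only
  congr 2
  ext u
  exact ⟨fun hu => ⟨hu.1, hu.2.trans hle⟩, fun hu => ⟨hu.1, le_csSup hFt.bddAbove hu⟩⟩

theorem IsCompact.exists_lipschitzWith_Icc_subset_image {F : Set ℝ} (hF : IsCompact F)
    (hF0 : volume F ≠ 0) : ∃ (K : ℝ≥0) (f : ℝ → ℝ), LipschitzWith K f ∧ Icc 0 1 ⊆ f '' F := by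
  set r := (volume F).toReal
  have hr : 0 < r := ENNReal.toReal_pos hF0 hF.measure_lt_top.ne
  refine ⟨_, _, (lipschitzWith_smul r⁻¹).comp (lipschitzWith_volume_inter_Iic hF.measure_lt_top.ne),
    fun s hs => ?_⟩
  obtain ⟨t, htF, hts⟩ := hF.Icc_subset_image_volume_inter_Iic (nonempty_of_measure_ne_zero hF0)
    ⟨mul_nonneg hs.1 hr.le, mul_le_of_le_one_left hr.le hs.2⟩
  refine ⟨t, htF, ?_⟩
  simp only [comp_apply, hts, smul_eq_mul]
  field_simp

theorem StarProp.exists_mem_of_isCompact (hstar : StarProp) {F : Set ℝ} (hF : IsCompact F)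
    (hF0 : volume F ≠ 0) {κ : Type} (C : κ → Set ℝ) (hκ : #κ < 𝔠) (hC : ∀ k, IsClosed (C k))
    (hC0 : ∀ k, volume (C k) = 0) : ∃ x ∈ F, ∀ k, x ∉ C k := by
  obtain ⟨K, f, hf, hfF⟩ := hF.exists_lipschitzWith_Icc_subset_image hF0
  by_contra! hcover
  refine hstar (range fun k => f '' (C k ∩ F)) (Cardinal.mk_range_le.trans_lt hκ) ?_ ?_
  · rintro _ ⟨k, rfl⟩
    exact ⟨((hF.inter_left (hC k)).image hf.continuous).isClosed,
      hf.volume_image_eq_zero (measure_mono_null inter_subset_left (hC0 k))⟩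
  · intro s hs
    obtain ⟨t, htF, rfl⟩ := hfF hs
    obtain ⟨k, hk⟩ := hcover t htF
    exact ⟨_, ⟨k, rfl⟩, mem_image_of_mem f ⟨hk, htF⟩⟩

theorem StarProp.exists_mem_diff (hstar : StarProp) {A N : Set ℝ} (hA : MeasurableSet A)
    (hA0 : volume A ≠ 0) (hN : volume N = 0) {κ : Type} (C : κ → Set ℝ) (hκ : #κ < 𝔠)
    (hC : ∀ k, IsClosed (C k)) (hC0 : ∀ k, volume (C k) = 0) :
    ∃ x ∈ A, x ∉ N ∧ ∀ k, x ∉ C k := by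
  have hpos : 0 < volume (A \ toMeasurable volume N) := by
    rwa [measure_sdiff_null (by rwa [measure_toMeasurable]), pos_iff_ne_zero]
  obtain ⟨K, hKA, hK, hK0⟩ :=
    (hA.diff (measurableSet_toMeasurable volume N)).exists_lt_isCompact hpos
  obtain ⟨x, hxK, hxC⟩ := hstar.exists_mem_of_isCompact hK hK0.ne' C hκ hC hC0
  exact ⟨x, (hKA hxK).1, fun hxN => (hKA hxK).2 (subset_toMeasurable volume N hxN), hxC⟩

theorem MeasureTheory.Measure.ae_measure_setOf_prod_mem_eq_zero {α β : Type*} [MeasurableSpace α]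
    [MeasurableSpace β] {μ : Measure α} {ν : Measure β} [SFinite μ] [SFinite ν]
    {s : Set (α × β)} (hs : μ.prod ν s = 0) :
    (∀ᵐ x ∂μ, ν {y | (x, y) ∈ s} = 0) ∧ ∀ᵐ y ∂ν, μ {x | (x, y) ∈ s} = 0 := by
  have hswap : ν.prod μ (Prod.swap ⁻¹' s) = 0 := by
    rwa [← MeasurePreserving.measure_preimage_equiv (f := MeasurableEquiv.prodComm)
      Measure.measurePreserving_swap s] at hs
  exact ⟨Measure.measure_ae_null_of_prod_null hs, Measure.measure_ae_null_of_prod_null hswap⟩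

theorem StarProp.exists_forall_prod_notMem (hstar : StarProp) {Q : Set (ℝ × ℝ)}
    (hQc : IsClosed Q) (hQ0 : volume Q = 0) {ι : Type} [LinearOrder ι] [WellFoundedLT ι]
    (hι : ∀ i : ι, #(Iio i) < 𝔠) (F : ι → Set ℝ) (hF : ∀ i, MeasurableSet (F i))
    (hF0 : ∀ i, volume (F i) ≠ 0) :
    ∃ x y : ι → ℝ, (∀ i, x i ∈ F i ∧ y i ∈ F i) ∧ ∀ i j, (x i, y j) ∉ Q := by
  rw [Measure.volume_eq_prod] at hQ0
  obtain ⟨hvert, hhor⟩ := Measure.ae_measure_setOf_prod_mem_eq_zero hQ0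
  -- points whose horizontal and vertical lines meet `Q` in a null set
  let G := {p : ℝ × ℝ // volume {y | (p.1, y) ∈ Q} = 0 ∧ volume {x | (x, p.2) ∈ Q} = 0}
  have step : ∀ i (prev : Iio i → G), ∃ p : G, p.1.1 ∈ F i ∧ p.1.2 ∈ F i ∧ p.1 ∉ Q ∧
      ∀ j, (p.1.1, (prev j).1.2) ∉ Q ∧ ((prev j).1.1, p.1.2) ∉ Q := by
    intro i prev
    obtain ⟨x, hxF, hx, hxQ⟩ := hstar.exists_mem_diff (hF i) (hF0 i) (ae_iff.mp hvert)
      (fun j => {x | (x, (prev j).1.2) ∈ Q}) (hι i)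
      (fun _ => hQc.preimage (by fun_prop)) (fun j => (prev j).2.2)
    obtain ⟨y, hyF, hy, hyQ⟩ := hstar.exists_mem_diff (hF i) (hF0 i)
      (measure_union_null (ae_iff.mp hhor) (not_not.mp hx))
      (fun j => {y | ((prev j).1.1, y) ∈ Q}) (hι i)
      (fun _ => hQc.preimage (by fun_prop)) (fun j => (prev j).2.1)
    exact ⟨⟨(x, y), not_not.mp hx, not_not.mp fun h => hy (Or.inl h)⟩, hxF, hyF,
      fun h => hy (Or.inr h), fun j => ⟨hxQ j, hyQ j⟩⟩
  obtain ⟨p, hp⟩ := exists_forall_of_forall_exists_Iio _ step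
  refine ⟨fun i => (p i).1.1, fun i => (p i).1.2, fun i => ⟨(hp i).1, (hp i).2.1⟩, fun i j => ?_⟩
  rcases lt_trichotomy i j with h | rfl | h
  · exact ((hp j).2.2.2 ⟨i, h⟩).2
  · exact (hp i).2.2.1
  · exact ((hp i).2.2.2 ⟨j, h⟩).1

theorem MeasureTheory.Measure.measure_eq_of_forall_isCompact_inter_nonempty {α : Type*} [TopologicalSpace α]
    [MeasurableSpace α] {μ : Measure α} [μ.InnerRegular] {T D : Set α} (hT : MeasurableSet T)
    (hDT : D ⊆ T) (hD : ∀ K ⊆ T, IsCompact K → μ K ≠ 0 → (K ∩ D).Nonempty) : μ D = μ T := by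
  have hnull : μ (T \ toMeasurable μ D) = 0 := by
    by_contra h
    obtain ⟨K, hKT, hK, hK0⟩ :=
      (hT.diff (measurableSet_toMeasurable μ D)).exists_lt_isCompact (pos_iff_ne_zero.mpr h)
    obtain ⟨x, hxK, hxD⟩ := hD K (hKT.trans sdiff_subset) hK hK0.ne'
    exact (hKT hxK).2 (subset_toMeasurable μ D hxD)
  refine le_antisymm (measure_mono hDT) ?_
  calc μ T ≤ μ (T ∩ toMeasurable μ D) + μ (T \ toMeasurable μ D) := measure_le_inter_add_sdiff μ _ _
    _ ≤ μ D := by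
      rw [hnull, add_zero, ← measure_toMeasurable D]
      exact measure_mono inter_subset_right

theorem innerMeasure_eq_zero_of_forall_isCompact {S : Set ℝ} (hS : ∀ K ⊆ S, IsCompact K → volume K = 0) :
    innerMeasure S = 0 := by
  simp only [innerMeasure, ENNReal.iSup_eq_zero]
  intro K hKS hK
  by_contra h
  obtain ⟨L, hLK, hL, hL0⟩ := hK.exists_lt_isCompact (pos_iff_ne_zero.mpr h)
  exact hL0.ne' (hS L (hLK.trans hKS) hL)

/-- **2G.**  `(*)` and `(‡)` are mutually incompatible: assuming `(*)`, there is no closed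
negligible `Q ⊆ [0,1]²` carrying every set of full outer measure onto a set of full inner
measure. -/
theorem stmt_19 (hstar : StarProp) : ¬ DoubleDaggerProp := by
  rintro ⟨Q, hQI, hQc, hQ0, hQD⟩
  set 𝒦 := {K : Set ℝ | IsCompact K ∧ K ⊆ Icc 0 1 ∧ volume K ≠ 0}
  obtain ⟨F, hF⟩ : ∃ F : (Cardinal.ord 𝔠).ToType → Set ℝ, range F = 𝒦 :=
    exists_range_eq_of_mk_le ⟨Icc 0 1, isCompact_Icc, subset_rfl, by simp⟩ <| by
      simpa using (Cardinal.mk_le_mk_of_subset fun K hK => hK.1.measurableSet).trans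
        MeasurableSpace.mk_setOf_measurableSet_le_continuum
  have hF𝒦 (i) : F i ∈ 𝒦 := hF ▸ mem_range_self i
  obtain ⟨x, y, hxyF, hxyQ⟩ := hstar.exists_forall_prod_notMem hQc hQ0
    (fun i => by simpa using Cardinal.mk_Iio_lt i) F
    (fun i => (hF𝒦 i).1.measurableSet) (fun i => (hF𝒦 i).2.2)
  have hyI : range y ⊆ Icc 0 1 := range_subset_iff.mpr fun i => (hF𝒦 i).2.1 (hxyF i).2
  have hy : volume (range y) = 1 := by
    rw [← show volume (Icc (0 : ℝ) 1) = 1 by simp]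
    refine Measure.measure_eq_of_forall_isCompact_inter_nonempty measurableSet_Icc hyI
      fun K hKI hK hK0 => ?_
    obtain ⟨i, rfl⟩ : K ∈ range F := hF ▸ ⟨hK, hKI, hK0⟩
    exact ⟨y i, (hxyF i).2, mem_range_self i⟩
  refine zero_ne_one ((innerMeasure_eq_zero_of_forall_isCompact fun K hKS hK => ?_).symm.trans (hQD _ hyI hy))
  by_contra hK0
  have hKI : K ⊆ Icc 0 1 := fun t ht => by
    obtain ⟨_, -, htQ⟩ := hKS ht
    exact (hQI htQ).1
  obtain ⟨i, rfl⟩ : K ∈ range F := hF ▸ ⟨hK, hKI, hK0⟩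
  obtain ⟨_, ⟨j, rfl⟩, hQ⟩ := hKS (hxyF i).1
  exact hxyQ i j hQ
end
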